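/- For a monotone Boolean function f : {0,1}^{2n} → {0,1}, for each j ∈ [2n-2], the number of size-j sets in the boundary B_f(1) is at most C(2n-2, j)·μ'(j) + C(2n-2, j-1)·μ'(j-1), where μ'(k) is the fraction of size-k subsets of [2n-1]\{1} in the boundary B_{f'}(1) of the minor f' obtained by identifying coordinates 1 and 2. -/

import Mathlib

open Finset

/-- A Boolean function on subsets of `Fin m` is monotone. -/
def MonotoneB {m : ℕ} (f : Finset (Fin m) → Bool) : Prop :=
  ∀ S T : Finset (Fin m), S ⊆ T → f S = true → f T = true

/-- The boundary of coordinate `i`: sets `S` not containing `i` with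
`f (S ∪ {i}) = 1` and `f S = 0`. -/
def boundary {m : ℕ} (f : Finset (Fin m) → Bool) (i : Fin m) : Finset (Finset (Fin m)) :=
  Finset.univ.filter (fun S => i ∉ S ∧ f (insert i S) = true ∧ f S = false)

/-- `mu f i j` : the fraction of size-`j` subsets of `[m] \ {i}` lying in the
boundary of coordinate `i`. -/
def mu {m : ℕ} (f : Finset (Fin m) → Bool) (i : Fin m) (j : ℕ) : ℚ :=
  (((boundary f i).filter (fun S => S.card = j)).card : ℚ) / (((m - 1).choose j : ℕ) : ℚ)

/-- The Shapley value of coordinate `i` of `f` : the probability over a uniformly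
random permutation `σ` that `i` is the pivotal coordinate on the increasing path
`∅ = P₀ ⊂ P₁ ⊂ ⋯ ⊂ Pₘ = univ` given by `σ`. -/
def shapley {m : ℕ} (f : Finset (Fin m) → Bool) (i : Fin m) : ℚ :=
  (((Finset.univ : Finset (Equiv.Perm (Fin m))).filter (fun σ =>
    ∃ j : Fin m, σ j = i ∧
      f ((Finset.univ.filter (fun k => k < j)).image (fun k => σ k)) = false ∧
      f ((Finset.univ.filter (fun k => k ≤ j)).image (fun k => σ k)) = true)).card : ℚ)
    / ((Nat.factorial m : ℕ) : ℚ)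

/-- `g` is the minor of `f` with respect to `π`. -/
def minorOf {m k : ℕ} (g : Finset (Fin k) → Bool) (f : Finset (Fin m) → Bool)
    (π : Fin m → Fin k) : Prop :=
  ∀ S : Finset (Fin k), g S = f (Finset.univ.filter (fun i => π i ∈ S))

/-- The minor of `f` with respect to `π`, as a function. -/
def minorFun {m k : ℕ} (f : Finset (Fin m) → Bool) (π : Fin m → Fin k) :
    Finset (Fin k) → Bool :=
  fun S => f (Finset.univ.filter (fun i => π i ∈ S))

/-- The map `π₁ : [2n] → [2n-1]` identifying the first two coordinates
(`π₁(i) = max(i-1,1)` in 1-indexed notation). -/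
def pi1 (n : ℕ) (hn : 0 < n) : Fin (2*n) → Fin (2*n-1) :=
  fun i => ⟨i.val - 1, by have := i.isLt; omega⟩

/-! In 0-indexed coordinates, write `φ S` for the image under `pi1` of `S \ {1}`. For `S` in the
boundary of `f` at `0`, the set `S \ {1}` avoids both identified coordinates, so `pi1` is injective
on it, its preimage of `φ S` is `S \ {1}`, and that of `insert 0 (φ S)` is `S ∪ {0, 1}`;
monotonicity of `f` then puts `φ S` in the boundary of `f'` at `0`. Splitting the size-`j` sets `S`
by whether `1 ∈ S`, `φ` is injective on each part and sends it to sets of size `j`, resp. `j - 1`.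
Since `C(2n-2, k) · μ'(k)` is just the number of size-`k` boundary sets of `f'`, this is the bound. -/

section Counting

variable {α β : Type*} [DecidableEq α]

theorem card_filter_card_eq_le_of_erase (𝓕 : Finset (Finset α)) (𝓖 : Finset (Finset β))
    (b : α) (φ : Finset α → Finset β)
    (hmaps : ∀ S ∈ 𝓕, φ (S.erase b) ∈ 𝓖)
    (hinj : ∀ S ∈ 𝓕, ∀ T ∈ 𝓕, φ (S.erase b) = φ (T.erase b) → S.erase b = T.erase b)
    (hcard : ∀ S ∈ 𝓕, #(φ (S.erase b)) = #(S.erase b)) (j : ℕ) :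
    #{S ∈ 𝓕 | #S = j} ≤ #{T ∈ 𝓖 | #T = j} + #{T ∈ 𝓖 | #T = j - 1} := by
  rw [← card_filter_add_card_filter_not (p := fun S => b ∉ S)]
  gcongr
  · refine card_le_card_of_injOn (fun S => φ (S.erase b)) (fun S hS => ?_) fun S hS T hT h => ?_
    · simp only [mem_coe, mem_filter] at hS ⊢
      obtain ⟨⟨hS𝓕, rfl⟩, hbS⟩ := hS
      exact ⟨hmaps S hS𝓕, by rw [hcard S hS𝓕, erase_eq_of_notMem hbS]⟩
    · simp only [mem_coe, mem_filter] at hS hT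
      simpa only [erase_eq_of_notMem hS.2, erase_eq_of_notMem hT.2] using
        hinj S hS.1.1 T hT.1.1 h
  · refine card_le_card_of_injOn (fun S => φ (S.erase b)) (fun S hS => ?_) fun S hS T hT h => ?_
    · simp only [mem_coe, mem_filter, not_not] at hS ⊢
      obtain ⟨⟨hS𝓕, rfl⟩, hbS⟩ := hS
      exact ⟨hmaps S hS𝓕, by rw [hcard S hS𝓕, card_erase_of_mem hbS]⟩
    · simp only [mem_coe, mem_filter, not_not] at hS hT
      exact erase_injOn' b hS.2 hT.2 (hinj S hS.1.1 T hT.1.1 h)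

end Counting

theorem choose_mul_mu {m : ℕ} (g : Finset (Fin m) → Bool) (i : Fin m) (k : ℕ) :
    (((m - 1).choose k : ℕ) : ℚ) * mu g i k = #{S ∈ boundary g i | #S = k} := by
  by_cases hk : k ≤ m - 1
  · have hchoose : (((m - 1).choose k : ℕ) : ℚ) ≠ 0 := by exact_mod_cast (Nat.choose_pos hk).ne'
    rw [mu, mul_div_cancel₀ _ hchoose]
  · have hempty : {S ∈ boundary g i | #S = k} = ∅ := by
      refine filter_eq_empty_iff.mpr fun S hS hSk => hk ?_
      have hiS : i ∉ S := (mem_filter.mp hS).2.1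
      calc k = #S := hSk.symm
        _ ≤ #(univ.erase i) :=
          card_le_card fun x hx => mem_erase.mpr ⟨ne_of_mem_of_not_mem hx hiS, mem_univ x⟩
        _ = m - 1 := by rw [card_erase_of_mem (mem_univ i), card_univ, Fintype.card_fin]
    simp [hempty, Nat.choose_eq_zero_of_lt (not_le.mp hk)]

section IdentifyFirstTwo

variable {n : ℕ} (hn : 0 < n)

theorem preimage_pi1_insert_zero (T : Finset (Fin (2*n-1))) :
    univ.filter (fun i => pi1 n hn i ∈ insert ⟨0, by grind⟩ T) =
      insert ⟨0, by grind⟩ (insert ⟨1, by grind⟩ (univ.filter (fun i => pi1 n hn i ∈ T))) := by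
  ext i
  have hi : pi1 n hn i = ⟨0, by grind⟩ ↔ i = ⟨0, by grind⟩ ∨ i = ⟨1, by grind⟩ := by
    simp only [pi1, Fin.ext_iff]
    omega
  simp only [mem_filter, mem_univ, true_and, mem_insert, hi, or_assoc]

theorem one_lt_val_of_mem_erase_one {S : Finset (Fin (2*n))}
    (hS : (⟨0, by grind⟩ : Fin (2*n)) ∉ S) : ∀ i ∈ S.erase ⟨1, by grind⟩, 1 < i.val :=
  fun i hi => by
    obtain ⟨hi1, hiS⟩ := mem_erase.mp hi
    have hi0 : i ≠ ⟨0, by grind⟩ := ne_of_mem_of_not_mem hiS hS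
    simp only [ne_eq, Fin.ext_iff] at hi0 hi1
    omega

section AvoidingFirstTwo

variable {A : Finset (Fin (2*n))} (hA : ∀ i ∈ A, 1 < i.val)
include hA

theorem pi1_injOn : Set.InjOn (pi1 n hn) A := fun a ha b hb hab => by
  have := hA a ha
  have := hA b hb
  simp only [pi1, Fin.ext_iff] at hab ⊢
  omega

theorem preimage_pi1_image : univ.filter (fun i => pi1 n hn i ∈ A.image (pi1 n hn)) = A := by
  ext i
  simp only [mem_filter, mem_univ, true_and, mem_image]
  constructor
  · rintro ⟨a, ha, hai⟩
    have := hA a ha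
    have hai : a = i := by simp only [pi1, Fin.ext_iff] at hai ⊢; omega
    exact hai ▸ ha
  · exact fun hi => ⟨i, hi, rfl⟩

theorem zero_notMem_image_pi1 : (⟨0, by grind⟩ : Fin (2*n-1)) ∉ A.image (pi1 n hn) := by
  simp only [mem_image, not_exists, not_and]
  intro a ha hai
  have := hA a ha
  simp only [pi1, Fin.ext_iff] at hai
  omega

end AvoidingFirstTwo

theorem image_pi1_erase_one_mem_boundary {f : Finset (Fin (2*n)) → Bool}
    {f' : Finset (Fin (2*n-1)) → Bool} (hf : MonotoneB f) (hminor : minorOf f' f (pi1 n hn))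
    {S : Finset (Fin (2*n))} (hS : S ∈ boundary f ⟨0, by grind⟩) :
    (S.erase ⟨1, by grind⟩).image (pi1 n hn) ∈ boundary f' ⟨0, by grind⟩ := by
  obtain ⟨h0S, hinsert, hS⟩ := (mem_filter.mp hS).2
  have hA := one_lt_val_of_mem_erase_one hn h0S
  refine mem_filter.mpr ⟨mem_univ _, zero_notMem_image_pi1 hn hA, ?_, ?_⟩
  · rw [hminor, preimage_pi1_insert_zero, preimage_pi1_image hn hA]
    exact hf _ _ (insert_subset_insert _ (insert_erase_subset _ _)) hinsert
  · rw [hminor, preimage_pi1_image hn hA]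
    cases h : f (S.erase ⟨1, by grind⟩)
    · rfl
    · simpa [hS] using hf _ _ (erase_subset _ _) h

end IdentifyFirstTwo

/-- Counting bound: the number of size-`j` boundary sets of coordinate 1 of `f`
is at most `C(2n-2,j)·μ'(j) + C(2n-2,j-1)·μ'(j-1)`, where `μ'` refers to the
boundary of coordinate 1 of the minor `f'` obtained by identifying
coordinates 1 and 2. -/
theorem boundary_count_minor (n : ℕ) (hn : 0 < n)
    (f : Finset (Fin (2*n)) → Bool) (f' : Finset (Fin (2*n-1)) → Bool)
    (hf : MonotoneB f)
    (hminor : minorOf f' f (pi1 n hn)) (j : ℕ) :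
    ((((boundary f ⟨0, by omega⟩).filter (fun S => S.card = j)).card : ℚ)) ≤
      ((Nat.choose (2*n-2) j : ℕ) : ℚ) * mu f' ⟨0, by omega⟩ j +
      ((Nat.choose (2*n-2) (j-1) : ℕ) : ℚ) * mu f' ⟨0, by omega⟩ (j-1) := by
  have hA (S) (hS : S ∈ boundary f ⟨0, by omega⟩) :=
    one_lt_val_of_mem_erase_one hn (mem_filter.mp hS).2.1
  have hcount := card_filter_card_eq_le_of_erase _ _ _ _
    (fun S hS => image_pi1_erase_one_mem_boundary hn hf hminor hS)
    (fun S hS T hT h => by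
      rw [← preimage_pi1_image hn (hA S hS), h, preimage_pi1_image hn (hA T hT)])
    (fun S hS => card_image_of_injOn (pi1_injOn hn (hA S hS))) j
  rw [show 2*n-2 = 2*n-1-1 by omega, choose_mul_mu, choose_mul_mu]
  exact_mod_cast hcount
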